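/- Under the stated assumptions, the local length element satisfies ∂_t g(u,t) = (−κ(u,t) v_N(u,t) + ∂_s v_T(u,t)) g(u,t) for all u and t. -/

import Mathlib

noncomputable section

open Real
open scoped RealInnerProductSpace

/-- The cross product on `EuclideanSpace ℝ (Fin 3)`. -/
def cross3 (a b : EuclideanSpace ℝ (Fin 3)) : EuclideanSpace ℝ (Fin 3) :=
  (WithLp.equiv 2 (Fin 3 → ℝ)).symm
    ![a 1 * b 2 - a 2 * b 1, a 2 * b 0 - a 0 * b 2, a 0 * b 1 - a 1 * b 0]

/-- Partial derivative with respect to the first (spatial) variable `u`. -/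
def pu {α : Type*} [NormedAddCommGroup α] [NormedSpace ℝ α]
    (f : ℝ × ℝ → α) (p : ℝ × ℝ) : α :=
  deriv (fun u => f (u, p.2)) p.1

/-- Partial derivative with respect to the second (time) variable `t`. -/
def pt {α : Type*} [NormedAddCommGroup α] [NormedSpace ℝ α]
    (f : ℝ × ℝ → α) (p : ℝ × ℝ) : α :=
  deriv (fun t => f (p.1, t)) p.2

/-- Arc-length derivative `∂_s = g⁻¹ ∂_u` along the curves parametrized by `X`. -/
def Ds (X : ℝ × ℝ → EuclideanSpace ℝ (Fin 3)) {α : Type*}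
    [NormedAddCommGroup α] [NormedSpace ℝ α] (f : ℝ × ℝ → α) (p : ℝ × ℝ) : α :=
  ‖pu X p‖⁻¹ • pu f p

section helpers
variable {α : Type*} [NormedAddCommGroup α] [NormedSpace ℝ α]

lemma hasDerivAt_mk1 (t u : ℝ) : HasDerivAt (fun u : ℝ => (u, t)) ((1 : ℝ), (0 : ℝ)) u :=
  (hasDerivAt_id u).prodMk (hasDerivAt_const _ _)

lemma hasDerivAt_mk2 (u t : ℝ) : HasDerivAt (fun t : ℝ => (u, t)) ((0 : ℝ), (1 : ℝ)) t :=
  (hasDerivAt_const _ _).prodMk (hasDerivAt_id t)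

lemma hasDerivAt_slice1 {f : ℝ × ℝ → α} {p : ℝ × ℝ} (hf : DifferentiableAt ℝ f p) :
    HasDerivAt (fun u => f (u, p.2)) (pu f p) p.1 :=
  (hf.comp p.1 (hasDerivAt_mk1 p.2 p.1).differentiableAt).hasDerivAt

lemma hasDerivAt_slice2 {f : ℝ × ℝ → α} {p : ℝ × ℝ} (hf : DifferentiableAt ℝ f p) :
    HasDerivAt (fun t => f (p.1, t)) (pt f p) p.2 :=
  (hf.comp p.2 (hasDerivAt_mk2 p.1 p.2).differentiableAt).hasDerivAt

lemma pu_eq {f : ℝ × ℝ → α} {p : ℝ × ℝ} (hf : DifferentiableAt ℝ f p) :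
    pu f p = fderiv ℝ f p (1, 0) :=
  (hf.hasFDerivAt.comp_hasDerivAt p.1 (hasDerivAt_mk1 p.2 p.1)).deriv

lemma pt_eq {f : ℝ × ℝ → α} {p : ℝ × ℝ} (hf : DifferentiableAt ℝ f p) :
    pt f p = fderiv ℝ f p (0, 1) :=
  (hf.hasFDerivAt.comp_hasDerivAt p.2 (hasDerivAt_mk2 p.1 p.2)).deriv

end helpers

lemma inner_cross3_left (a b : EuclideanSpace ℝ (Fin 3)) : ⟪cross3 a b, a⟫ = 0 := by
  simp [cross3, PiLp.inner_apply, Fin.sum_univ_three, RCLike.inner_apply, conj_trivial,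
    WithLp.equiv_symm_apply, PiLp.toLp_apply]
  ring

lemma inner_cross3_right (a b : EuclideanSpace ℝ (Fin 3)) : ⟪cross3 a b, b⟫ = 0 := by
  simp [cross3, PiLp.inner_apply, Fin.sum_univ_three, RCLike.inner_apply, conj_trivial,
    WithLp.equiv_symm_apply, PiLp.toLp_apply]
  ring

lemma diff_cross3 {H : Type*} [NormedAddCommGroup H] [NormedSpace ℝ H]
    {a b : H → EuclideanSpace ℝ (Fin 3)} {x : H}
    (ha : DifferentiableAt ℝ a x) (hb : DifferentiableAt ℝ b x) :
    DifferentiableAt ℝ (fun u => cross3 (a u) (b u)) x := by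
  have ha' := differentiableAt_euclidean.1 ha
  have hb' := differentiableAt_euclidean.1 hb
  rw [differentiableAt_euclidean]
  intro i
  fin_cases i <;>
    simp only [cross3, WithLp.equiv_symm_apply, PiLp.toLp_apply, Matrix.cons_val_zero, Matrix.cons_val_one,
      Matrix.head_cons, Matrix.cons_val_two, Matrix.tail_cons, Fin.isValue] <;>
  exact DifferentiableAt.sub (DifferentiableAt.mul (ha' _) (hb' _))
    (DifferentiableAt.mul (ha' _) (hb' _))

theorem local_length_evolution
    (X : ℝ × ℝ → EuclideanSpace ℝ (Fin 3)) (vN vB vT : ℝ × ℝ → ℝ)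
    (g κ τ : ℝ × ℝ → ℝ) (T N B : ℝ × ℝ → EuclideanSpace ℝ (Fin 3))
    (hX : ContDiff ℝ (⊤ : ℕ∞) X) (hXper : ∀ u t : ℝ, X (u + 1, t) = X (u, t))
    (hvN : ContDiff ℝ (⊤ : ℕ∞) vN) (hvNper : ∀ u t : ℝ, vN (u + 1, t) = vN (u, t))
    (hvB : ContDiff ℝ (⊤ : ℕ∞) vB) (hvBper : ∀ u t : ℝ, vB (u + 1, t) = vB (u, t))
    (hvT : ContDiff ℝ (⊤ : ℕ∞) vT) (hvTper : ∀ u t : ℝ, vT (u + 1, t) = vT (u, t))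
    (hg : ∀ p : ℝ × ℝ, g p = ‖pu X p‖) (hgpos : ∀ p : ℝ × ℝ, 0 < g p)
    (hT : ∀ p : ℝ × ℝ, T p = Ds X X p)
    (hκ : ∀ p : ℝ × ℝ, κ p = ‖Ds X T p‖) (hκpos : ∀ p : ℝ × ℝ, 0 < κ p)
    (hN : ∀ p : ℝ × ℝ, N p = (κ p)⁻¹ • Ds X T p)
    (hB : ∀ p : ℝ × ℝ, B p = cross3 (T p) (N p))
    (hτ : ∀ p : ℝ × ℝ, τ p = -(inner ℝ (Ds X B p) (N p) : ℝ))
    (hflow : ∀ p : ℝ × ℝ, pt X p = vN p • N p + vB p • B p + vT p • T p) :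
    ∀ p : ℝ × ℝ, pt g p = (-(κ p * vN p) + Ds X vT p) * g p := by
  intro p
  have hXd : Differentiable ℝ X := hX.differentiable (by simp)
  have hpuX : ∀ q, pu X q = fderiv ℝ X q (1, 0) := fun q => pu_eq (hXd q)
  set Y : ℝ × ℝ → EuclideanSpace ℝ (Fin 3) := fun q => fderiv ℝ X q (1, 0) with hYdef
  have hfXc : ContDiff ℝ (⊤ : ℕ∞) (fderiv ℝ X) := hX.fderiv_right (by simp)
  have hYc : ContDiff ℝ (⊤ : ℕ∞) Y :=
    (ContinuousLinearMap.apply ℝ (EuclideanSpace ℝ (Fin 3)) ((1 : ℝ), (0 : ℝ))).contDiff.comp hfXc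
  have hYd : Differentiable ℝ Y := hYc.differentiable (by simp)
  have hgY : ∀ q, g q = ‖Y q‖ := fun q => by rw [hg, hpuX]
  have hYne : ∀ q, Y q ≠ 0 := fun q => by
    have := hgpos q; rw [hgY q] at this; exact norm_pos_iff.mp this
  have hgne : ∀ q, g q ≠ 0 := fun q => (hgpos q).ne'
  -- T
  have hTY : ∀ q, T q = ‖Y q‖⁻¹ • Y q := fun q => by rw [hT, Ds, hpuX]
  have hTc : ∀ q, ContDiffAt ℝ (⊤ : ℕ∞) T q := by
    intro q
    have : ContDiffAt ℝ (⊤ : ℕ∞) (fun q => ‖Y q‖⁻¹ • Y q) q :=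
      (((hYc.contDiffAt).norm ℝ (hYne q)).inv (norm_ne_zero_iff.mpr (hYne q))).smul hYc.contDiffAt
    exact this.congr_of_eventuallyEq (Filter.Eventually.of_forall hTY)
  have hTd : ∀ q, DifferentiableAt ℝ T q := fun q => (hTc q).differentiableAt (by simp)
  have hpuT : ∀ q, pu T q = fderiv ℝ T q (1, 0) := fun q => pu_eq (hTd q)
  set Z : ℝ × ℝ → EuclideanSpace ℝ (Fin 3) := fun q => fderiv ℝ T q (1, 0) with hZdef
  have hZd : ∀ q, DifferentiableAt ℝ Z q := by
    intro q
    have h1 : ContDiffAt ℝ (⊤ : ℕ∞) (fderiv ℝ T) q := (hTc q).fderiv_right (by simp)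
    exact ((ContinuousLinearMap.apply ℝ (EuclideanSpace ℝ (Fin 3))
      ((1 : ℝ), (0 : ℝ))).contDiff.contDiffAt.comp q h1).differentiableAt (by simp)
  have hDsT : ∀ q, Ds X T q = ‖Y q‖⁻¹ • Z q := fun q => by rw [Ds, hpuX, hpuT]
  have hκne : ∀ q, κ q ≠ 0 := fun q => (hκpos q).ne'
  have hDsTne : ∀ q, Ds X T q ≠ 0 := fun q => by
    have := hκpos q; rw [hκ q] at this; exact norm_pos_iff.mp this
  -- N differentiability
  have hNd : ∀ q, DifferentiableAt ℝ N q := by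
    intro q
    set W : ℝ × ℝ → EuclideanSpace ℝ (Fin 3) := fun q => ‖Y q‖⁻¹ • Z q with hW
    have hWc : DifferentiableAt ℝ W q :=
      ((((hYc.contDiffAt).norm ℝ (hYne q)).inv
        (norm_ne_zero_iff.mpr (hYne q))).differentiableAt (by simp)).smul (hZd q)
    have hWnorm : DifferentiableAt ℝ (fun q => ‖W q‖) q := by
      refine (DifferentiableAt.norm ℝ hWc ?_)
      have := hDsTne q; rw [hDsT q] at this; exact this
    have hWne : ‖W q‖ ≠ 0 := by
      rw [norm_ne_zero_iff]; have := hDsTne q; rw [hDsT q] at this; exact this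
    have : DifferentiableAt ℝ (fun q => ‖W q‖⁻¹ • W q) q :=
      (hWnorm.inv hWne).smul hWc
    refine this.congr_of_eventuallyEq (Filter.Eventually.of_forall fun q' => ?_)
    rw [hN, hκ, hDsT q']
  have hBd : ∀ q, DifferentiableAt ℝ B q := by
    intro q
    have : DifferentiableAt ℝ (fun q => cross3 (T q) (N q)) q := diff_cross3 (hTd q) (hNd q)
    exact this.congr_of_eventuallyEq (Filter.Eventually.of_forall hB)
  -- orthogonality facts
  have hTT : ∀ q, ⟪T q, T q⟫ = 1 := by
    intro q
    rw [hTY q, real_inner_smul_left, real_inner_smul_right, real_inner_self_eq_norm_sq]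
    field_simp [norm_ne_zero_iff.mpr (hYne q)]
  have hpuTT : ∀ q, ⟪pu T q, T q⟫ = 0 := by
    intro q
    have h1 := (hasDerivAt_slice1 (hTd q)).inner ℝ (hasDerivAt_slice1 (hTd q))
    have h2 : HasDerivAt (fun u => ⟪T (u, q.2), T (u, q.2)⟫) 0 q.1 := by
      have he : (fun u : ℝ => ⟪T (u, q.2), T (u, q.2)⟫) = fun _ => (1 : ℝ) :=
        funext fun u => hTT (u, q.2)
      rw [he]; exact hasDerivAt_const _ _
    have h3 := h1.unique h2
    have h4 := real_inner_comm (T q) (pu T q)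
    rw [real_inner_comm] at h3 ⊢
    linarith [h3]
  have hNT : ∀ q, ⟪N q, T q⟫ = 0 := by
    intro q
    rw [hN q, real_inner_smul_left, Ds, real_inner_smul_left, hpuTT q, mul_zero, mul_zero]
  have hBT : ∀ q, ⟪B q, T q⟫ = 0 := fun q => by rw [hB q]; exact inner_cross3_left _ _
  have hBN : ∀ q, ⟪B q, N q⟫ = 0 := fun q => by rw [hB q]; exact inner_cross3_right _ _
  -- pu T p in terms of Ds X T p
  have hpuTval : pu T p = g p • Ds X T p := by
    rw [hDsT p, hpuT p, smul_smul, hgY p, mul_inv_cancel₀ (norm_ne_zero_iff.mpr (hYne p)),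
      one_smul]
  have hDsTN : Ds X T p = κ p • N p := by
    rw [hN p, smul_smul, mul_inv_cancel₀ (hκne p), one_smul]
  have hNpuT : ⟪N p, pu T p⟫ = g p * κ p := by
    rw [hpuTval, hN p, real_inner_smul_left, real_inner_smul_right,
      real_inner_self_eq_norm_sq, ← hκ p]
    field_simp [hκne p]
  have hpuNT : ⟪pu N p, T p⟫ = -(g p * κ p) := by
    have h1 := (hasDerivAt_slice1 (hNd p)).inner ℝ (hasDerivAt_slice1 (hTd p))
    have h2 : HasDerivAt (fun u => ⟪N (u, p.2), T (u, p.2)⟫) 0 p.1 := by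
      have he : (fun u : ℝ => ⟪N (u, p.2), T (u, p.2)⟫) = fun _ => (0 : ℝ) :=
        funext fun u => hNT (u, p.2)
      rw [he]; exact hasDerivAt_const _ _
    have h3 := h1.unique h2
    rw [hNpuT] at h3
    linarith
  have hpuBT : ⟪pu B p, T p⟫ = 0 := by
    have h1 := (hasDerivAt_slice1 (hBd p)).inner ℝ (hasDerivAt_slice1 (hTd p))
    have h2 : HasDerivAt (fun u => ⟪B (u, p.2), T (u, p.2)⟫) 0 p.1 := by
      have he : (fun u : ℝ => ⟪B (u, p.2), T (u, p.2)⟫) = fun _ => (0 : ℝ) :=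
        funext fun u => hBT (u, p.2)
      rw [he]; exact hasDerivAt_const _ _
    have h3 := h1.unique h2
    have h4 : ⟪B p, pu T p⟫ = 0 := by
      rw [hpuTval, hDsTN, real_inner_smul_right, real_inner_smul_right, hBN p]
      ring
    rw [h4] at h3
    linarith
  -- symmetry of second derivative
  have hfd2 : DifferentiableAt ℝ (fderiv ℝ X) p := hfXc.differentiable (by simp) p
  have hsymm : ∀ v w, fderiv ℝ (fderiv ℝ X) p v w = fderiv ℝ (fderiv ℝ X) p w v :=
    hX.contDiffAt.isSymmSndFDerivAt (by simp; exact WithTop.coe_le_coe.2 le_top)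
  have hYfd : HasFDerivAt Y ((ContinuousLinearMap.apply ℝ (EuclideanSpace ℝ (Fin 3))
      ((1 : ℝ), (0 : ℝ))).comp (fderiv ℝ (fderiv ℝ X) p)) p :=
    (ContinuousLinearMap.apply ℝ (EuclideanSpace ℝ (Fin 3))
      ((1 : ℝ), (0 : ℝ))).hasFDerivAt.comp p hfd2.hasFDerivAt
  have hptY : pt Y p = fderiv ℝ (fderiv ℝ X) p (0, 1) (1, 0) := by
    rw [pt_eq hYfd.differentiableAt, hYfd.fderiv]; rfl
  set Xt : ℝ × ℝ → EuclideanSpace ℝ (Fin 3) := fun q => fderiv ℝ X q (0, 1) with hXtdef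
  have hXtfd : HasFDerivAt Xt ((ContinuousLinearMap.apply ℝ (EuclideanSpace ℝ (Fin 3))
      ((0 : ℝ), (1 : ℝ))).comp (fderiv ℝ (fderiv ℝ X) p)) p :=
    (ContinuousLinearMap.apply ℝ (EuclideanSpace ℝ (Fin 3))
      ((0 : ℝ), (1 : ℝ))).hasFDerivAt.comp p hfd2.hasFDerivAt
  have hpuXt : pu Xt p = fderiv ℝ (fderiv ℝ X) p (1, 0) (0, 1) := by
    rw [pu_eq hXtfd.differentiableAt, hXtfd.fderiv]; rfl
  have hswap : pt Y p = pu Xt p := by rw [hptY, hpuXt, hsymm]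
  -- product rule on the flow
  have hXtflow : ∀ q, Xt q = vN q • N q + vB q • B q + vT q • T q := fun q => by
    show (fderiv ℝ X q) (0, 1) = _
    rw [← pt_eq (hXd q), hflow]
  have hvNs := hasDerivAt_slice1 (hvN.differentiable (by simp) p)
  have hvBs := hasDerivAt_slice1 (hvB.differentiable (by simp) p)
  have hvTs := hasDerivAt_slice1 (hvT.differentiable (by simp) p)
  have hNs := hasDerivAt_slice1 (hNd p)
  have hBs := hasDerivAt_slice1 (hBd p)
  have hTs := hasDerivAt_slice1 (hTd p)
  have hsum := ((hvNs.smul hNs).add (hvBs.smul hBs)).add (hvTs.smul hTs)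
  have hpuXtval : pu Xt p = (vN p • pu N p + pu vN p • N p) +
      (vB p • pu B p + pu vB p • B p) + (vT p • pu T p + pu vT p • T p) := by
    have he : (fun u => Xt (u, p.2)) = fun u => vN (u, p.2) • N (u, p.2) +
        vB (u, p.2) • B (u, p.2) + vT (u, p.2) • T (u, p.2) :=
      funext fun u => hXtflow (u, p.2)
    show deriv (fun u => Xt (u, p.2)) p.1 = _
    rw [he]
    exact hsum.deriv
  -- time derivative of g
  have hc : HasDerivAt (fun t => Y (p.1, t)) (pt Y p) p.2 := hasDerivAt_slice2 (hYd p)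
  have hq := hc.inner ℝ hc
  have hqne : ⟪Y p, Y p⟫ ≠ (0 : ℝ) := by
    rw [real_inner_self_eq_norm_sq]
    exact pow_ne_zero 2 (norm_ne_zero_iff.mpr (hYne p))
  have hsq := hq.sqrt hqne
  have hgslice : (fun t => g (p.1, t)) = fun t => Real.sqrt ⟪Y (p.1, t), Y (p.1, t)⟫ :=
    funext fun t => by
      rw [hgY, real_inner_self_eq_norm_sq, Real.sqrt_sq (norm_nonneg _)]
  have hptg : pt g p = (⟪Y p, pt Y p⟫ + ⟪pt Y p, Y p⟫) / (2 * Real.sqrt ⟪Y p, Y p⟫) := by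
    show deriv (fun t => g (p.1, t)) p.2 = _
    rw [hgslice]
    exact hsq.deriv
  have hsqYY : Real.sqrt ⟪Y p, Y p⟫ = g p := by
    rw [real_inner_self_eq_norm_sq, Real.sqrt_sq (norm_nonneg _), hgY]
  have hYT : Y p = g p • T p := by
    rw [hTY p, smul_smul, hgY p, mul_inv_cancel₀ (norm_ne_zero_iff.mpr (hYne p)), one_smul]
  have hptg2 : pt g p = ⟪pt Y p, T p⟫ := by
    rw [hptg, hsqYY, hYT, real_inner_smul_left, real_inner_smul_right,
      real_inner_comm (T p) (pt Y p)]
    field_simp [hgne p]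
    ring
  -- final assembly
  rw [hptg2, hswap, hpuXtval]
  simp only [inner_add_left, real_inner_smul_left]
  rw [hpuNT, hNT p, hpuBT, hBT p, hpuTT p, hTT p]
  have hDsvT : Ds X vT p = (g p)⁻¹ * pu vT p := by
    rw [Ds, smul_eq_mul, ← hg p]
  rw [hDsvT]
  field_simp [hgne p]
  ring
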